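/- arXiv:math/0504348 — 4 statements merged into one kernel-verified Lean document; each statement's English description precedes it below -/
import Mathlib

section
/- Assume the Calogero–Degasperis kernel condition L₊ⁿ(r,q)ᵀ = L₋ⁿ(r,q)ᵀ for every n ≥ 0. Then for every n ≥ 0: (i) (L₋+L₊)ⁿ(r,q)ᵀ = 2ⁿ·L₊ⁿ(r,q)ᵀ; and (ii) with R = σ(L₋+L₊)σ⁻¹ where σ = [0,1;−1,0], J = Diag(−i,i), and H = −∫ r q dx (so that J∇H = (−iq, ir)ᵀ), one has RⁿJ∇H = 2ⁿσ₂L₊ⁿ(r,q)ᵀ with σ₂ = [0,−i; i,0]; equivalently, the flow ((q,r)ᵀ)_t = RⁿJ∇H can be rewritten in the Calogero–Degasperis form ((−r,q)ᵀ)_t = −2ⁿ·i·L₊ⁿ(r,q)ᵀ. Hence the NLS hierarchy generated by the recursion operator R is a sub-hierarchy of the Calogero–Degasperis family of flows. -/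
/- STATEMENT 1: assuming the Calogero–Degasperis kernel condition
L₊ⁿ(r,q)ᵀ = L₋ⁿ(r,q)ᵀ for all n, one has (i) (L₋+L₊)ⁿ(r,q)ᵀ = 2ⁿ L₊ⁿ(r,q)ᵀ, and
(ii) Rⁿ J∇H = 2ⁿ σ₂ L₊ⁿ(r,q)ᵀ for R = σ(L₋+L₊)σ⁻¹ and J∇H = (−iq, ir)ᵀ;
equivalently (iii) the flow (q,r)ᵀ_t = RⁿJ∇H takes the Calogero–Degasperis form
((−r,q)ᵀ)_t = −2ⁿ·i·L₊ⁿ(r,q)ᵀ.  Hence the NLS hierarchy generated by R is a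
sub-hierarchy of the Calogero–Degasperis family. -/

open MeasureTheory Complex

noncomputable section

abbrev F2 : Type := (ℝ → ℂ) × (ℝ → ℂ)

/-- I₊ f (x) = ∫_x^∞ f -/
def Ipl (f : ℝ → ℂ) (x : ℝ) : ℂ := ∫ y in Set.Ioi x, f y

/-- I₋ f (x) = ∫_{−∞}^x f -/
def Imi (f : ℝ → ℂ) (x : ℝ) : ℂ := ∫ y in Set.Iic x, f y

/-- L₊ = (1/2i)[σ₃∂ₓ + 2[rI₊q, −rI₊r; qI₊q, −qI₊r]] -/
def Lplus (q r : ℝ → ℂ) (u : F2) : F2 :=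
  (fun x => (1 / (2 * I)) * (deriv u.1 x
      + 2 * (r x * Ipl (fun y => q y * u.1 y) x - r x * Ipl (fun y => r y * u.2 y) x)),
   fun x => (1 / (2 * I)) * (-(deriv u.2 x)
      + 2 * (q x * Ipl (fun y => q y * u.1 y) x - q x * Ipl (fun y => r y * u.2 y) x)))

/-- L₋ = (1/2i)[σ₃∂ₓ − 2[rI₋q, −rI₋r; qI₋q, −qI₋r]] -/
def Lminus (q r : ℝ → ℂ) (u : F2) : F2 :=
  (fun x => (1 / (2 * I)) * (deriv u.1 x
      - 2 * (r x * Imi (fun y => q y * u.1 y) x - r x * Imi (fun y => r y * u.2 y) x)),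
   fun x => (1 / (2 * I)) * (-(deriv u.2 x)
      - 2 * (q x * Imi (fun y => q y * u.1 y) x - q x * Imi (fun y => r y * u.2 y) x)))

/-- σ = [0,1;−1,0] -/
def sigmaMap (u : F2) : F2 := (u.2, fun x => -(u.1 x))

/-- σ⁻¹ = [0,−1;1,0] -/
def sigmaInv (u : F2) : F2 := (fun x => -(u.2 x), u.1)

/-- the Pauli matrix σ₂ = [0,−i; i,0] -/
def sigma2 (u : F2) : F2 := (fun x => -I * u.2 x, fun x => I * u.1 x)

/-- the recursion operator R = σ(L₋+L₊)σ⁻¹ -/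
def Rop (q r : ℝ → ℂ) (u : F2) : F2 :=
  sigmaMap (Lminus q r (sigmaInv u) + Lplus q r (sigmaInv u))

/- The kernel condition L₊ⁿu₀ = L₋ⁿu₀ (u₀ = (r,q)) gives L₋(L₊ⁿu₀) = L₋ⁿ⁺¹u₀ = L₊ⁿ⁺¹u₀, so on the
orbit of u₀ the operator L₋ acts as L₊, and since both operators are homogeneous, each application
of L₋ + L₊ doubles: (L₋+L₊)ⁿu₀ = 2ⁿL₊ⁿu₀. Conjugation by σ carries the iterates of L₋ + L₊ to those
of R, and J∇H = σ(−i u₀), σ₂ = −iσ turn this into Rⁿ J∇H = 2ⁿσ₂L₊ⁿu₀. -/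

theorem Function.apply_iterate_eq_iterate_succ_of_iterate_eq {α : Type*} {f g : α → α} {u : α}
    (h : ∀ n, g^[n] u = f^[n] u) (n : ℕ) : f (g^[n] u) = g^[n + 1] u := by
  rw [h, h, Function.iterate_succ_apply']

theorem iterate_map_smul {R M : Type*} [SMul R M] {A : M → M} {c : R}
    (hA : ∀ v, A (c • v) = c • A v) (n : ℕ) (v : M) : A^[n] (c • v) = c • A^[n] v :=
  (Function.Commute.iterate_left (f := A) (g := (c • ·)) hA n) v

theorem iterate_add_apply_eq_two_pow_smul {R M : Type*} [CommSemiring R] [AddCommMonoid M]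
    [Module R M] {A B : M → M}
    (hA : ∀ (c : R) v, A (c • v) = c • A v) (hB : ∀ (c : R) v, B (c • v) = c • B v)
    {u : M} (hAB : ∀ n, A (B^[n] u) = B^[n + 1] u) (n : ℕ) :
    (fun v => A v + B v)^[n] u = (2 ^ n : R) • B^[n] u := by
  induction n with
  | zero => simp
  | succ n ih =>
    rw [Function.iterate_succ_apply', ih, hA, hB, ← smul_add, hAB, ← Function.iterate_succ_apply' B,
      ← two_smul R, smul_smul, pow_succ]

-- Homogeneity is all that holds in general: `deriv` and the integrals take junk values on
-- non-differentiable or non-integrable arguments, so `L₊` and `L₋` need not be additive.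
theorem Lplus_smul (q r : ℝ → ℂ) (c : ℂ) (u : F2) : Lplus q r (c • u) = c • Lplus q r u := by
  ext x <;>
  simp only [Lplus, Ipl, Prod.smul_fst, Prod.smul_snd, Pi.smul_apply, smul_eq_mul,
    deriv_const_smul_field, mul_left_comm (q _) c, mul_left_comm (r _) c, integral_const_mul] <;>
  ring

theorem Lminus_smul (q r : ℝ → ℂ) (c : ℂ) (u : F2) : Lminus q r (c • u) = c • Lminus q r u := by
  ext x <;>
  simp only [Lminus, Imi, Prod.smul_fst, Prod.smul_snd, Pi.smul_apply, smul_eq_mul,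
    deriv_const_smul_field, mul_left_comm (q _) c, mul_left_comm (r _) c, integral_const_mul] <;>
  ring

theorem sigmaMap_smul (c : ℂ) (u : F2) : sigmaMap (c • u) = c • sigmaMap u := by
  ext x <;> simp [sigmaMap]

theorem sigma2_eq_neg_I_smul_sigmaMap (u : F2) : sigma2 u = (-I) • sigmaMap u := by
  ext x <;> simp [sigma2, sigmaMap]

theorem sigmaInv_sigmaMap (u : F2) : sigmaInv (sigmaMap u) = u := by
  ext x <;> simp [sigmaInv, sigmaMap]

theorem semiconj_sigmaMap_Rop (q r : ℝ → ℂ) :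
    Function.Semiconj sigmaMap (fun u => Lminus q r u + Lplus q r u) (Rop q r) := fun u => by
  rw [Rop, sigmaInv_sigmaMap]

theorem NLS_hierarchy_is_CalogeroDegasperis_subhierarchy
    (q r : SchwartzMap ℝ ℂ)
    (hker : ∀ n : ℕ, (Lplus (⇑q) (⇑r))^[n] (⇑r, ⇑q) = (Lminus (⇑q) (⇑r))^[n] (⇑r, ⇑q)) :
    -- (i)
    (∀ n : ℕ, (fun u => Lminus (⇑q) (⇑r) u + Lplus (⇑q) (⇑r) u)^[n] (⇑r, ⇑q)
        = (2 ^ n : ℂ) • (Lplus (⇑q) (⇑r))^[n] (⇑r, ⇑q)) ∧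
    -- (ii)  Rⁿ J∇H = 2ⁿ σ₂ L₊ⁿ(r,q)  with J∇H = (−iq, ir)
    (∀ n : ℕ, (Rop (⇑q) (⇑r))^[n] (fun x => -I * q x, fun x => I * r x)
        = (2 ^ n : ℂ) • sigma2 ((Lplus (⇑q) (⇑r))^[n] (⇑r, ⇑q))) ∧
    -- (iii)  with (q_t, r_t) = RⁿJ∇H one has (−r_t, q_t) = −2ⁿ i L₊ⁿ(r,q)
    (∀ n : ℕ,
      ((fun x => -(((Rop (⇑q) (⇑r))^[n] (fun x => -I * q x, fun x => I * r x)).2 x),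
        ((Rop (⇑q) (⇑r))^[n] (fun x => -I * q x, fun x => I * r x)).1) : F2)
        = (-(2 ^ n) * I : ℂ) • (Lplus (⇑q) (⇑r))^[n] (⇑r, ⇑q)) := by
  have hsum : ∀ n : ℕ, (fun u => Lminus (⇑q) (⇑r) u + Lplus (⇑q) (⇑r) u)^[n] (⇑r, ⇑q)
      = (2 ^ n : ℂ) • (Lplus (⇑q) (⇑r))^[n] (⇑r, ⇑q) :=
    iterate_add_apply_eq_two_pow_smul (Lminus_smul q r) (Lplus_smul q r)
      (Function.apply_iterate_eq_iterate_succ_of_iterate_eq hker)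
  have hJgradH : ((fun x => -I * q x, fun x => I * r x) : F2) = sigmaMap ((-I) • (⇑r, ⇑q)) := by
    ext x <;> simp [sigmaMap]
  have hR : ∀ n : ℕ, (Rop (⇑q) (⇑r))^[n] (fun x => -I * q x, fun x => I * r x)
      = (2 ^ n : ℂ) • sigma2 ((Lplus (⇑q) (⇑r))^[n] (⇑r, ⇑q)) := fun n => by
    rw [hJgradH, ← (semiconj_sigmaMap_Rop q r).iterate_right n,
      iterate_map_smul (fun v => by rw [Lminus_smul, Lplus_smul, smul_add]), hsum,
      sigma2_eq_neg_I_smul_sigmaMap, sigmaMap_smul, sigmaMap_smul, smul_comm]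
  refine ⟨hsum, hR, fun n => ?_⟩
  rw [hR n]
  ext x <;> simp [sigma2] <;> ring
end
end

section
/- With respect to the inner product ⟨(v₁,v₂)ᵀ,(w₁,w₂)ᵀ⟩ = −∫(v₁w₂ + v₂w₁)dx on pairs of rapidly decaying functions, the Calogero–Degasperis operators satisfy L₋ = σ₃ L₊* σ₃⁻¹, where * denotes the adjoint with respect to this inner product and σ₃ = Diag(1,−1). -/
/- STATEMENT 2: with respect to the inner product ⟨(v₁,v₂),(w₁,w₂)⟩ = −∫(v₁w₂+v₂w₁)dx
on pairs of rapidly decaying functions, the Calogero–Degasperis operators satisfy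
L₋ = σ₃ L₊* σ₃⁻¹ (equivalently ⟨L₊X, Y⟩ = ⟨X, σ₃(L₋(σ₃Y))⟩ for all X, Y, since
σ₃⁻¹ = σ₃ and L₊* is the adjoint). -/

open MeasureTheory Complex

noncomputable section

abbrev SPt : Type := SchwartzMap ℝ ℂ × SchwartzMap ℝ ℂ

def toF2 (p : SPt) : F2 := (⇑p.1, ⇑p.2)

/-- the inner product ⟨(v₁,v₂),(w₁,w₂)⟩ = −∫ (v₁w₂ + v₂w₁) dx -/
def ipC (v w : F2) : ℂ := -∫ x : ℝ, (v.1 x * w.2 x + v.2 x * w.1 x)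

/-- σ₃ = Diag(1,−1) -/
def sigma3 (u : F2) : F2 := (u.1, fun x => -(u.2 x))

namespace CDhelp

open Set Filter

lemma mul_integrable (f : SchwartzMap ℝ ℂ) {g : ℝ → ℂ} (hg : Integrable g) :
    Integrable (fun x => f x * g x) :=
  hg.bdd_mul f.continuous.aestronglyMeasurable
    (Filter.Eventually.of_forall fun x => (f.norm_le_seminorm ℝ x : ‖f x‖ ≤ SchwartzMap.seminorm ℝ 0 0 f))

lemma smul_integrable (f g : SchwartzMap ℝ ℂ) : Integrable (fun x => f x * g x) :=
  mul_integrable f g.integrable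

lemma deriv_integrable (f : SchwartzMap ℝ ℂ) : Integrable (deriv (⇑f)) := by
  have := (SchwartzMap.derivCLM ℝ ℂ f).integrable (μ := volume)
  simpa [funext fun x => SchwartzMap.derivCLM_apply (𝕜 := ℝ) f x] using this

lemma deriv_mul_integrable (f g : SchwartzMap ℝ ℂ) :
    Integrable (fun x => deriv (⇑f) x * g x) := by
  simpa [mul_comm] using mul_integrable g (deriv_integrable f)

lemma mul_deriv_integrable (f g : SchwartzMap ℝ ℂ) :
    Integrable (fun x => f x * deriv (⇑g) x) :=
  mul_integrable f (deriv_integrable g)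

lemma continuous_Imi {f : ℝ → ℂ} (hf : Integrable f) : Continuous (Imi f) := by
  have h : Imi f = fun x => Imi f 0 + ∫ t in (0:ℝ)..x, f t := by
    funext x
    rw [← intervalIntegral.integral_Iic_sub_Iic hf.integrableOn hf.integrableOn]
    simp [Imi]
  rw [h]
  exact continuous_const.add (hf.continuous_primitive 0)

lemma Ipl_eq {f : ℝ → ℂ} (hf : Integrable f) (x : ℝ) :
    Ipl f x = (∫ t, f t) - Imi f x := by
  rw [eq_sub_iff_add_eq, Imi, Ipl, add_comm]
  exact intervalIntegral.integral_Iic_add_Ioi hf.integrableOn hf.integrableOn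

lemma continuous_Ipl {f : ℝ → ℂ} (hf : Integrable f) : Continuous (Ipl f) := by
  have h : Ipl f = fun x => (∫ t, f t) - Imi f x := funext (Ipl_eq hf)
  rw [h]; exact continuous_const.sub (continuous_Imi hf)

lemma norm_Imi_le {f : ℝ → ℂ} (hf : Integrable f) (x : ℝ) : ‖Imi f x‖ ≤ ∫ t, ‖f t‖ := by
  refine (norm_integral_le_integral_norm _).trans ?_
  exact setIntegral_le_integral hf.norm (Eventually.of_forall fun t => norm_nonneg _)

lemma norm_Ipl_le {f : ℝ → ℂ} (hf : Integrable f) (x : ℝ) : ‖Ipl f x‖ ≤ ∫ t, ‖f t‖ := by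
  refine (norm_integral_le_integral_norm _).trans ?_
  exact setIntegral_le_integral hf.norm (Eventually.of_forall fun t => norm_nonneg _)

lemma integrable_mul_Ipl {φ h : ℝ → ℂ} (hφ : Integrable φ) (hh : Integrable h) :
    Integrable (fun x => φ x * Ipl h x) := by
  simpa [mul_comm] using hφ.bdd_mul (continuous_Ipl hh).aestronglyMeasurable
    (Filter.Eventually.of_forall (norm_Ipl_le hh))

lemma integrable_mul_Imi {φ h : ℝ → ℂ} (hφ : Integrable φ) (hh : Integrable h) :
    Integrable (fun x => φ x * Imi h x) := by
  simpa [mul_comm] using hφ.bdd_mul (continuous_Imi hh).aestronglyMeasurable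
    (Filter.Eventually.of_forall (norm_Imi_le hh))

lemma fubini_Ipl {f g : ℝ → ℂ} (hf : Integrable f) (hg : Integrable g) :
    ∫ x, f x * Ipl g x = ∫ y, g y * Imi f y := by
  set F : ℝ × ℝ → ℂ := {p : ℝ × ℝ | p.1 < p.2}.indicator (fun p => f p.1 * g p.2) with hF
  have hs : MeasurableSet {p : ℝ × ℝ | p.1 < p.2} :=
    measurableSet_lt measurable_fst measurable_snd
  have hI : Integrable F (volume.prod volume) := (hf.mul_prod hg).indicator hs
  have h1 : ∀ x, (∫ y, F (x, y)) = f x * Ipl g x := by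
    intro x
    have e : (fun y => F (x, y)) = (Ioi x).indicator (fun y => f x * g y) := by
      funext y
      by_cases h : x < y <;> simp [hF, Set.indicator, h]
    rw [e, integral_indicator measurableSet_Ioi, integral_const_mul, Ipl]
  have h2 : ∀ y, (∫ x, F (x, y)) = g y * Imi f y := by
    intro y
    have e : (fun x => F (x, y)) = (Iio y).indicator (fun x => f x * g y) := by
      funext x
      by_cases h : x < y <;> simp [hF, Set.indicator, h]
    rw [e, integral_indicator measurableSet_Iio, integral_mul_const,
      setIntegral_congr_set Iio_ae_eq_Iic, mul_comm, Imi]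
  calc ∫ x, f x * Ipl g x = ∫ x, ∫ y, F (x, y) := by simp_rw [h1]
    _ = ∫ y, ∫ x, F (x, y) := integral_integral_swap hI
    _ = ∫ y, g y * Imi f y := by simp_rw [h2]

lemma ibp (f g : SchwartzMap ℝ ℂ) :
    ∫ x, f x * deriv (⇑g) x = - ∫ x, deriv (⇑f) x * g x :=
  integral_mul_deriv_eq_deriv_mul_of_integrable
    (fun _ _ => f.differentiableAt.hasDerivAt) (fun _ _ => g.differentiableAt.hasDerivAt)
    (mul_deriv_integrable f g) (deriv_mul_integrable f g) (smul_integrable f g)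

lemma Imi_add {f g : ℝ → ℂ} (hf : Integrable f) (hg : Integrable g) (x : ℝ) :
    Imi (fun y => f y + g y) x = Imi f x + Imi g x :=
  integral_add hf.integrableOn hg.integrableOn

lemma Imi_neg (f g : ℝ → ℂ) (x : ℝ) :
    Imi (fun y => f y * -(g y)) x = -(Imi (fun y => f y * g y) x) := by
  simp [Imi, mul_neg, integral_neg]

/-- The key cross-term identity. -/
lemma cross {g1 g2 A B : ℝ → ℂ} (hg1 : Integrable g1) (hg2 : Integrable g2)
    (hA : Integrable A) (hB : Integrable B) :
    ∫ x, (B x + A x) * (Ipl g1 x - Ipl g2 x)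
      = ∫ x, (g1 x - g2 x) * (Imi A x + Imi B x) := by
  have hF : Integrable (fun x => B x + A x) := hB.add hA
  have hImiF : ∀ x, Imi (fun y => B y + A y) x = Imi B x + Imi A x :=
    Imi_add hB hA
  calc ∫ x, (B x + A x) * (Ipl g1 x - Ipl g2 x)
      = ∫ x, ((B x + A x) * Ipl g1 x - (B x + A x) * Ipl g2 x) :=
        integral_congr_ae (Eventually.of_forall fun x => by ring)
    _ = (∫ x, (B x + A x) * Ipl g1 x) - ∫ x, (B x + A x) * Ipl g2 x :=
        integral_sub (integrable_mul_Ipl hF hg1) (integrable_mul_Ipl hF hg2)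
    _ = (∫ y, g1 y * Imi (fun y => B y + A y) y)
        - ∫ y, g2 y * Imi (fun y => B y + A y) y := by
        rw [fubini_Ipl hF hg1, fubini_Ipl hF hg2]
    _ = ∫ y, (g1 y * Imi (fun y => B y + A y) y - g2 y * Imi (fun y => B y + A y) y) :=
        (integral_sub (integrable_mul_Imi hg1 hF) (integrable_mul_Imi hg2 hF)).symm
    _ = ∫ x, (g1 x - g2 x) * (Imi A x + Imi B x) :=
        integral_congr_ae (Eventually.of_forall fun y => by
          simp only [Pi.add_apply, Pi.sub_apply, hImiF]; ring)

end CDhelp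

open CDhelp in
/-- L₋ = σ₃ L₊* σ₃⁻¹, i.e. ⟨L₊X, Y⟩ = ⟨X, σ₃ L₋ σ₃ Y⟩ for all rapidly decaying X, Y. -/
theorem Lminus_eq_sigma3_Lplus_adjoint_sigma3
    (q r : SchwartzMap ℝ ℂ) (X Y : SPt) :
    ipC (Lplus (⇑q) (⇑r) (toF2 X)) (toF2 Y)
      = ipC (toF2 X) (sigma3 (Lminus (⇑q) (⇑r) (sigma3 (toF2 Y)))) := by
  have hg1 : Integrable (fun x => q x * X.1 x) := smul_integrable q X.1
  have hg2 : Integrable (fun x => r x * X.2 x) := smul_integrable r X.2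
  have hA : Integrable (fun x => q x * Y.1 x) := smul_integrable q Y.1
  have hB : Integrable (fun x => r x * Y.2 x) := smul_integrable r Y.2
  have hF : Integrable (fun x => r x * Y.2 x + q x * Y.1 x) := hB.add hA
  have hG : Integrable (fun x => q x * X.1 x - r x * X.2 x) := hg1.sub hg2
  set c : ℂ := 1 / (2 * I) with hc
  -- the six basic integrals
  set I1 : ℂ := ∫ x, deriv (⇑X.1) x * Y.2 x with hI1
  set I2 : ℂ := ∫ x, deriv (⇑X.2) x * Y.1 x with hI2
  set I3 : ℂ := ∫ x, (r x * Y.2 x + q x * Y.1 x) *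
      (Ipl (fun y => q y * X.1 y) x - Ipl (fun y => r y * X.2 y) x) with hI3
  set J1 : ℂ := ∫ x, X.1 x * deriv (⇑Y.2) x with hJ1
  set J2 : ℂ := ∫ x, X.2 x * deriv (⇑Y.1) x with hJ2
  set J3 : ℂ := ∫ x, (q x * X.1 x - r x * X.2 x) *
      (Imi (fun y => q y * Y.1 y) x + Imi (fun y => r y * Y.2 y) x) with hJ3
  have e1 : I1 = -J1 := by
    have h := ibp X.1 Y.2; rw [hI1, hJ1]; linear_combination h
  have e2 : I2 = -J2 := by
    have h := ibp X.2 Y.1; rw [hI2, hJ2]; linear_combination h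
  have e3 : I3 = J3 := by
    rw [hI3, hJ3]; exact cross hg1 hg2 hA hB
  -- integrability of integrand pieces
  have hI3i : Integrable (fun x => (r x * Y.2 x + q x * Y.1 x) *
      (Ipl (fun y => q y * X.1 y) x - Ipl (fun y => r y * X.2 y) x)) :=
    ((integrable_mul_Ipl hF hg1).sub (integrable_mul_Ipl hF hg2)).congr
      (Filter.Eventually.of_forall fun x => by
        simp only [Pi.sub_apply, Pi.add_apply]; ring)
  have hJ3i : Integrable (fun x => (q x * X.1 x - r x * X.2 x) *
      (Imi (fun y => q y * Y.1 y) x + Imi (fun y => r y * Y.2 y) x)) :=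
    ((integrable_mul_Imi hG hA).add (integrable_mul_Imi hG hB)).congr
      (Filter.Eventually.of_forall fun x => by
        simp only [Pi.sub_apply, Pi.add_apply]; ring)
  have hi1 := deriv_mul_integrable X.1 Y.2
  have hi2 := deriv_mul_integrable X.2 Y.1
  have hj1 := mul_deriv_integrable X.1 Y.2
  have hj2 := mul_deriv_integrable X.2 Y.1
  -- compute the left-hand side
  have hL : ipC (Lplus (⇑q) (⇑r) (toF2 X)) (toF2 Y) = -(c * I1 - c * I2 + 2 * c * I3) := by
    simp only [ipC, Lplus, toF2]
    congr 1
    calc (∫ x, (c * (deriv (⇑X.1) x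
            + 2 * (r x * Ipl (fun y => q y * X.1 y) x - r x * Ipl (fun y => r y * X.2 y) x)) * Y.2 x
          + c * (-(deriv (⇑X.2) x)
            + 2 * (q x * Ipl (fun y => q y * X.1 y) x - q x * Ipl (fun y => r y * X.2 y) x)) * Y.1 x))
        = ∫ x, (c * (deriv (⇑X.1) x * Y.2 x) - c * (deriv (⇑X.2) x * Y.1 x)
            + (2 * c) * ((r x * Y.2 x + q x * Y.1 x) *
              (Ipl (fun y => q y * X.1 y) x - Ipl (fun y => r y * X.2 y) x))) :=
          integral_congr_ae (Filter.Eventually.of_forall fun x => by ring)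
      _ = c * I1 - c * I2 + 2 * c * I3 := by
          have h1 : Integrable (fun x => c * (deriv (⇑X.1) x * Y.2 x)
              - c * (deriv (⇑X.2) x * Y.1 x)) volume :=
            (hi1.const_mul c).sub (hi2.const_mul c)
          have h2 : Integrable (fun x => (2 * c) * ((r x * Y.2 x + q x * Y.1 x) *
              (Ipl (fun y => q y * X.1 y) x - Ipl (fun y => r y * X.2 y) x))) volume :=
            hI3i.const_mul (2 * c)
          rw [integral_add h1 h2,
            integral_sub (hi1.const_mul c) (hi2.const_mul c),
            integral_const_mul, integral_const_mul, integral_const_mul, hI1, hI2, hI3]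
  -- compute the right-hand side
  have hR : ipC (toF2 X) (sigma3 (Lminus (⇑q) (⇑r) (sigma3 (toF2 Y))))
      = -(-(c * J1) + c * J2 + 2 * c * J3) := by
    simp only [ipC, Lminus, sigma3, toF2]
    congr 1
    calc (∫ x, (X.1 x * -(c * (-(deriv (fun x => -(Y.2 x)) x)
            - 2 * (q x * Imi (fun y => q y * Y.1 y) x - q x * Imi (fun y => r y * -(Y.2 y)) x)))
          + X.2 x * (c * (deriv (⇑Y.1) x
            - 2 * (r x * Imi (fun y => q y * Y.1 y) x - r x * Imi (fun y => r y * -(Y.2 y)) x)))))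
        = ∫ x, (-(c * (X.1 x * deriv (⇑Y.2) x)) + c * (X.2 x * deriv (⇑Y.1) x)
            + (2 * c) * ((q x * X.1 x - r x * X.2 x) *
              (Imi (fun y => q y * Y.1 y) x + Imi (fun y => r y * Y.2 y) x))) := by
          refine integral_congr_ae (Filter.Eventually.of_forall fun x => ?_)
          simp only [Imi_neg, deriv.fun_neg]
          ring
      _ = -(c * J1) + c * J2 + 2 * c * J3 := by
          have h1 : Integrable (fun x => -(c * (X.1 x * deriv (⇑Y.2) x))
              + c * (X.2 x * deriv (⇑Y.1) x)) volume :=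
            ((hj1.const_mul c).neg).add (hj2.const_mul c)
          have h2 : Integrable (fun x => (2 * c) * ((q x * X.1 x - r x * X.2 x) *
              (Imi (fun y => q y * Y.1 y) x + Imi (fun y => r y * Y.2 y) x))) volume :=
            hJ3i.const_mul (2 * c)
          have h3 : Integrable (fun x => -(c * (X.1 x * deriv (⇑Y.2) x))) volume :=
            (hj1.const_mul c).neg
          rw [integral_add h1 h2, integral_add h3 (hj2.const_mul c),
            integral_neg, integral_const_mul, integral_const_mul, integral_const_mul,
            hJ1, hJ2, hJ3]
  rw [hL, hR, e1, e2, e3]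
  ring

end
end

section
/- Let V be a complex vector space with a bilinear pairing ⟨·,·⟩, and let J, K : V → V be linear maps that are skew with respect to the pairing, i.e. ⟨x, Jy⟩ = −⟨y, Jx⟩ and ⟨x, Ky⟩ = −⟨y, Kx⟩ for all x, y ∈ V. Let (v_j)_{j∈ℤ} be a sequence in V satisfying the Lenard relations J v_{j+1} = K v_j for all j ∈ ℤ. Then ⟨v_j, J v_l⟩ = 0 for all j, l ∈ ℤ. (Interpreting v_j = ∇H_j as the gradients of Hamiltonian functionals, this says that all the ℐ-brackets {H_j, H_l}_J = ⟨∇H_j, J∇H_l⟩ vanish, so the corresponding flows mutually commute.) -/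
/- STATEMENT 18 (abstract commutation lemma): if J, K : V → V are skew with respect
to a bilinear pairing ⟨·,·⟩ on a complex vector space V, and (v_j)_{j∈ℤ} satisfies
the Lenard relations J v_{j+1} = K v_j, then ⟨v_j, J v_l⟩ = 0 for all j, l; i.e.
all the J-brackets {H_j, H_l}_J = ⟨∇H_j, J∇H_l⟩ vanish and the flows commute. -/

theorem lenard_scheme_commuting_flows
    {V : Type*} [AddCommGroup V] [Module ℂ V]
    (ip : V →ₗ[ℂ] V →ₗ[ℂ] ℂ) (J K : V →ₗ[ℂ] V)
    (hJ : ∀ x y : V, ip x (J y) = - ip y (J x))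
    (hK : ∀ x y : V, ip x (K y) = - ip y (K x))
    (v : ℤ → V) (hLenard : ∀ j : ℤ, J (v (j + 1)) = K (v j)) :
    ∀ j l : ℤ, ip (v j) (J (v l)) = 0 := by
  -- step: f j l = f (j+1) (l-1)
  have step : ∀ j l : ℤ, ip (v j) (J (v l)) = ip (v (j + 1)) (J (v (l - 1))) := by
    intro j l
    have h1 : J (v l) = K (v (l - 1)) := by
      have := hLenard (l - 1); simpa using this
    calc ip (v j) (J (v l)) = ip (v j) (K (v (l - 1))) := by rw [h1]
      _ = - ip (v (l - 1)) (K (v j)) := hK _ _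
      _ = - ip (v (l - 1)) (J (v (j + 1))) := by rw [hLenard j]
      _ = ip (v (j + 1)) (J (v (l - 1))) := by rw [hJ (v (l-1)) (v (j+1))]; ring
  -- shift: f j l = f (j+n) (l-n) for all n : ℤ
  have shift : ∀ j l n : ℤ, ip (v j) (J (v l)) = ip (v (j + n)) (J (v (l - n))) := by
    intro j l n
    induction n using Int.induction_on with
    | zero => simp
    | succ k ih =>
        rw [ih, step]
        ring_nf
    | pred k ih =>
        have := step (j + (-k - 1)) (l - (-k - 1))
        rw [show j + (-k - 1) + 1 = j + -(k:ℤ) by ring,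
            show l - (-k - 1) - 1 = l - -(k:ℤ) by ring] at this
        rw [← this] at ih
        rw [ih]
  intro j l
  have h := shift j l (l - j)
  rw [show j + (l - j) = l by ring, show l - (l - j) = j by ring] at h
  have h2 := hJ (v j) (v l)
  linear_combination h / 2 + h2 / 2
end

section
/- Let Φ_k(z) = (φ_k(z), ψ_k(z)) and define W_k = Φ_k·Diag(0,−1)·Φ_{k+1}⁻¹ = [γ_k, −α_k; β_k, −δ_k]. Then: (i) det Φ_k = φ_k^{(1)}ψ_k^{(2)} − ψ_k^{(1)}φ_k^{(2)} = a/P(k); (ii) the entries of W_k are given by the semi-shifted squared eigenfunctions [γ_k, −α_k; β_k, −δ_k] = (P(k+1)/a)·[ψ_k^{(1)}φ_{k+1}^{(2)}, −ψ_k^{(1)}φ_{k+1}^{(1)}; ψ_k^{(2)}φ_{k+1}^{(2)}, −ψ_k^{(2)}φ_{k+1}^{(1)}]; and (iii) they satisfy the identity (r_k α_k + z⁻¹ δ_k) − (q_k β_k + z γ_k) = 1 for all k. -/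
/- STATEMENT 19: with Φ_k(z) = (φ_k(z), ψ_k(z)) and
W_k = Φ_k·Diag(0,−1)·Φ_{k+1}⁻¹ = [γ_k, −α_k; β_k, −δ_k]:
(i) det Φ_k = a/P(k);
(ii) W_k = (P(k+1)/a)·[ψ_k^{(1)}φ_{k+1}^{(2)}, −ψ_k^{(1)}φ_{k+1}^{(1)};
                       ψ_k^{(2)}φ_{k+1}^{(2)}, −ψ_k^{(2)}φ_{k+1}^{(1)}];
(iii) (r_kα_k + z⁻¹δ_k) − (q_kβ_k + zγ_k) = 1. -/

noncomputable section

/-- P(k) = Π_{j=k}^∞ (1 − r_j q_j) -/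
def Pinf (q r : ℤ → ℂ) (k : ℤ) : ℂ := ∏' n : ℕ, (1 - r (k + n) * q (k + n))

/-- the discrete Zakharov–Shabat eigenvalue problem v_{k+1} = [z, q_k; r_k, 1/z]·v_k -/
def ZSsol (q r : ℤ → ℂ) (z : ℂ) (v : ℤ → ℂ × ℂ) : Prop :=
  ∀ k : ℤ, v (k + 1) = (z * (v k).1 + q k * (v k).2, r k * (v k).1 + z⁻¹ * (v k).2)

/-- φ_k ∼ z^k (1,0)ᵀ as k → −∞ -/
def JostPhiAsym (z : ℂ) (v : ℤ → ℂ × ℂ) : Prop :=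
  Filter.Tendsto (fun k : ℤ => ((v k).1 * z ^ (-k), (v k).2 * z ^ (-k)))
    Filter.atBot (nhds (1, 0))

/-- φ̂_k ∼ z^{−k} (0,1)ᵀ as k → −∞ -/
def JostPhiHatAsym (z : ℂ) (v : ℤ → ℂ × ℂ) : Prop :=
  Filter.Tendsto (fun k : ℤ => ((v k).1 * z ^ k, (v k).2 * z ^ k))
    Filter.atBot (nhds (0, 1))

/-- ψ_k ∼ z^{−k} (0,1)ᵀ as k → +∞ -/
def JostPsiAsym (z : ℂ) (v : ℤ → ℂ × ℂ) : Prop :=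
  Filter.Tendsto (fun k : ℤ => ((v k).1 * z ^ k, (v k).2 * z ^ k))
    Filter.atTop (nhds (0, 1))

/-- ψ̂_k ∼ z^k (1,0)ᵀ as k → +∞ -/
def JostPsiHatAsym (z : ℂ) (v : ℤ → ℂ × ℂ) : Prop :=
  Filter.Tendsto (fun k : ℤ => ((v k).1 * z ^ (-k), (v k).2 * z ^ (-k)))
    Filter.atTop (nhds (1, 0))

/-- the fundamental matrix Φ_k = (φ_k, ψ_k) -/
def PhiMat (φ ψ : ℤ → ℂ × ℂ) (k : ℤ) : Matrix (Fin 2) (Fin 2) ℂ :=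
  !![(φ k).1, (ψ k).1; (φ k).2, (ψ k).2]

open Filter Complex

section AuxPinf
variable (q r : ℤ → ℂ)

lemma aux_summable_log (hq : Summable q) (hr : Summable r)
    (hnz : ∀ k, 1 - r k * q k ≠ 0) :
    Summable (fun j : ℤ => Complex.log (1 - r j * q j)) := by
  have hrq : Summable fun j : ℤ => r j * q j := by
    refine Summable.of_norm_bounded_eventually (g := fun j => ‖r j‖) (summable_norm_iff.mpr hr) ?_
    have hqn : Tendsto (fun j => ‖q j‖) cofinite (nhds 0) := by
      simpa using hq.tendsto_cofinite_zero.norm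
    have hq0 : ∀ᶠ j in cofinite, ‖q j‖ < 1 := hqn.eventually_lt_const one_pos
    filter_upwards [hq0] with j hj
    calc ‖r j * q j‖ = ‖r j‖ * ‖q j‖ := norm_mul _ _
    _ ≤ ‖r j‖ * 1 := mul_le_mul_of_nonneg_left hj.le (norm_nonneg _)
    _ = ‖r j‖ := mul_one _
  refine Summable.of_norm_bounded_eventually (g := fun j => 3/2 * ‖r j * q j‖)
    ((summable_norm_iff.mpr hrq).mul_left _) ?_
  have hrqn : Tendsto (fun j => ‖r j * q j‖) cofinite (nhds 0) := by
    simpa using hrq.tendsto_cofinite_zero.norm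
  have h2 : ∀ᶠ j in cofinite, ‖r j * q j‖ < 1/2 := hrqn.eventually_lt_const (by norm_num)
  filter_upwards [h2] with j hj
  have : (1 : ℂ) - r j * q j = 1 + -(r j * q j) := by ring
  rw [this]
  simpa using Complex.norm_log_one_add_half_le_self (z := -(r j * q j)) (by simpa using hj.le)

lemma aux_inj (k : ℤ) : Function.Injective (fun n : ℕ => k + (n:ℤ)) := by
  intro m n h; simpa using h

lemma aux_sum_nat (hs : Summable (fun j : ℤ => Complex.log (1 - r j * q j))) (k : ℤ) :
    Summable (fun n : ℕ => Complex.log (1 - r (k + n) * q (k + n))) :=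
  hs.comp_injective (aux_inj k)

lemma aux_hasProd (hnz : ∀ k, 1 - r k * q k ≠ 0)
    (hs : Summable (fun j : ℤ => Complex.log (1 - r j * q j))) (k : ℤ) :
    HasProd (fun n : ℕ => 1 - r (k + n) * q (k + n))
      (Complex.exp (∑' n : ℕ, Complex.log (1 - r (k + n) * q (k + n)))) := by
  have h := (aux_sum_nat q r hs k).hasSum.cexp
  have hfun : (cexp ∘ fun n : ℕ => Complex.log (1 - r (k + n) * q (k + n)))
      = fun n : ℕ => 1 - r (k + n) * q (k + n) :=
    funext fun n => Complex.exp_log (hnz _)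
  rwa [hfun] at h

lemma aux_Pinf_exp (hnz : ∀ k, 1 - r k * q k ≠ 0)
    (hs : Summable (fun j : ℤ => Complex.log (1 - r j * q j))) (k : ℤ) :
    Pinf q r k = Complex.exp (∑' n : ℕ, Complex.log (1 - r (k + n) * q (k + n))) := by
  unfold Pinf
  exact (aux_hasProd q r hnz hs k).tprod_eq

lemma aux_Pinf_ne (hnz : ∀ k, 1 - r k * q k ≠ 0)
    (hs : Summable (fun j : ℤ => Complex.log (1 - r j * q j))) (k : ℤ) :
    Pinf q r k ≠ 0 := by
  rw [aux_Pinf_exp q r hnz hs k]; exact Complex.exp_ne_zero _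

set_option maxHeartbeats 1000000 in
lemma aux_Pinf_rec (hnz : ∀ k, 1 - r k * q k ≠ 0)
    (hs : Summable (fun j : ℤ => Complex.log (1 - r j * q j))) (k : ℤ) :
    Pinf q r k = (1 - r k * q k) * Pinf q r (k + 1) := by
  have harg : ∀ n : ℕ, ((k + 1) + (n : ℤ)) = k + ((n + 1 : ℕ) : ℤ) := by
    intro n; push_cast; ring
  have hm1 : Multipliable (fun n : ℕ => 1 - r (k + ((n + 1 : ℕ) : ℤ)) * q (k + ((n + 1 : ℕ) : ℤ))) := by
    have hm : Multipliable (fun n : ℕ => 1 - r ((k + 1) + n) * q ((k + 1) + n)) :=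
      ⟨_, aux_hasProd q r hnz hs (k + 1)⟩
    simpa only [harg] using hm
  have h := tprod_eq_zero_mul' (f := fun n : ℕ => 1 - r (k + (n:ℤ)) * q (k + (n:ℤ))) hm1
  unfold Pinf
  simp only [← harg] at h
  simpa using h

lemma aux_Pinf_tendsto (hnz : ∀ k, 1 - r k * q k ≠ 0)
    (hs : Summable (fun j : ℤ => Complex.log (1 - r j * q j))) :
    Tendsto (fun k : ℤ => Pinf q r k) atTop (nhds 1) := by
  set u : ℕ → ℂ := fun n => Complex.log (1 - r n * q n) with hu
  have h0 : Tendsto (fun i : ℕ => ∑' n : ℕ, u (n + i)) atTop (nhds 0) :=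
    tendsto_sum_nat_add u
  have htn : Tendsto Int.toNat atTop atTop :=
    tendsto_atTop_atTop.2 fun b => ⟨(b : ℤ), fun a ha => by omega⟩
  have h1 : Tendsto (fun k : ℤ => ∑' n : ℕ, u (n + k.toNat)) atTop (nhds 0) := h0.comp htn
  have h2 : Tendsto (fun k : ℤ => ∑' n : ℕ, Complex.log (1 - r (k + n) * q (k + n)))
      atTop (nhds 0) := by
    refine h1.congr' ?_
    filter_upwards [eventually_ge_atTop (0 : ℤ)] with k hk
    have harg : ∀ n : ℕ, ((n + k.toNat : ℕ) : ℤ) = k + (n : ℤ) := by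
      intro n; push_cast; omega
    simp only [hu, harg]
  have h3 := (Complex.continuous_exp.tendsto 0).comp h2
  simp only [Complex.exp_zero] at h3
  refine h3.congr fun k => ?_
  exact (aux_Pinf_exp q r hnz hs k).symm
end AuxPinf

theorem Wk_squared_eigenfunction_identities
    (q r : ℤ → ℂ) (hq : Summable q) (hr : Summable r)
    (hnz : ∀ k, 1 - r k * q k ≠ 0)
    (z : ℂ) (hz : z ≠ 0)
    (φ φh ψ ψh : ℤ → ℂ × ℂ) (a ah b bh : ℂ) (ha : a ≠ 0) (hah : ah ≠ 0)
    (hφ : ZSsol q r z φ) (hφh : ZSsol q r z φh)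
    (hψ : ZSsol q r z ψ) (hψh : ZSsol q r z ψh)
    (hφA : JostPhiAsym z φ) (hφhA : JostPhiHatAsym z φh)
    (hψA : JostPsiAsym z ψ) (hψhA : JostPsiHatAsym z ψh)
    (hscat : ∀ k, φ k = (b * (ψ k).1 + a * (ψh k).1, b * (ψ k).2 + a * (ψh k).2))
    (hscath : ∀ k, φh k = (ah * (ψ k).1 + bh * (ψh k).1, ah * (ψ k).2 + bh * (ψh k).2))
    -- the semi-shifted squared eigenfunctions γ_k, α_k, β_k, δ_k :
    (γ α β δ : ℤ → ℂ)
    (hγ : ∀ k, γ k = Pinf q r (k+1) / a * ((ψ k).1 * (φ (k+1)).2))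
    (hα : ∀ k, α k = Pinf q r (k+1) / a * ((ψ k).1 * (φ (k+1)).1))
    (hβ : ∀ k, β k = Pinf q r (k+1) / a * ((ψ k).2 * (φ (k+1)).2))
    (hδ : ∀ k, δ k = Pinf q r (k+1) / a * ((ψ k).2 * (φ (k+1)).1)) :
    -- (i) det Φ_k = a / P(k)
    (∀ k, (PhiMat φ ψ k).det = a / Pinf q r k) ∧
    -- (ii) W_k = Φ_k · Diag(0,−1) · Φ_{k+1}⁻¹ = [γ_k, −α_k; β_k, −δ_k]
    (∀ k, PhiMat φ ψ k * !![(0:ℂ), 0; 0, -1] * (PhiMat φ ψ (k+1))⁻¹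
        = !![γ k, -(α k); β k, -(δ k)]) ∧
    -- (iii) (r_kα_k + z⁻¹δ_k) − (q_kβ_k + zγ_k) = 1
    (∀ k, (r k * α k + z⁻¹ * δ k) - (q k * β k + z * γ k) = 1) := by
  have hs := aux_summable_log q r hq hr hnz
  have hPne := aux_Pinf_ne q r hnz hs
  set d : ℤ → ℂ := fun k => (φ k).1 * (ψ k).2 - (ψ k).1 * (φ k).2 with hd
  -- recursion for d
  have hdrec : ∀ k, d (k + 1) = (1 - r k * q k) * d k := by
    intro k
    simp only [hd, hφ k, hψ k]
    field_simp
    ring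
  -- limit of d
  have hzk : ∀ k : ℤ, z ^ (-k) * z ^ k = 1 := by
    intro k; rw [zpow_neg]; exact inv_mul_cancel₀ (zpow_ne_zero _ hz)
  have h1 : Tendsto (fun k : ℤ => (ψ k).1 * z ^ k) atTop (nhds 0) :=
    (continuous_fst.tendsto _).comp hψA
  have h2 : Tendsto (fun k : ℤ => (ψ k).2 * z ^ k) atTop (nhds 1) :=
    (continuous_snd.tendsto _).comp hψA
  have h3 : Tendsto (fun k : ℤ => (ψh k).1 * z ^ (-k)) atTop (nhds 1) :=
    (continuous_fst.tendsto _).comp hψhA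
  have h4 : Tendsto (fun k : ℤ => (ψh k).2 * z ^ (-k)) atTop (nhds 0) :=
    (continuous_snd.tendsto _).comp hψhA
  have hdlim : Tendsto d atTop (nhds a) := by
    have hF : Tendsto (fun k : ℤ => a * (((ψh k).1 * z ^ (-k)) * ((ψ k).2 * z ^ k)
        - ((ψ k).1 * z ^ k) * ((ψh k).2 * z ^ (-k)))) atTop (nhds (a * (1 * 1 - 0 * 0))) :=
      tendsto_const_nhds.mul ((h3.mul h2).sub (h1.mul h4))
    simp only [mul_one, mul_zero, sub_zero] at hF
    refine hF.congr fun k => ?_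
    simp only [hd, hscat k]
    linear_combination (a * ((ψh k).1 * (ψ k).2 - (ψ k).1 * (ψh k).2)) * (hzk k)
  -- D := Pinf * d is constant
  set D : ℤ → ℂ := fun k => Pinf q r k * d k with hD
  have hstep : ∀ k, D (k + 1) = D k := by
    intro k
    simp only [hD, hdrec k, aux_Pinf_rec q r hnz hs k]
    ring
  have hDconst : ∀ k, D k = D 0 := by
    intro k
    induction k using Int.induction_on with
    | zero => rfl
    | succ n ih => rw [hstep n, ih]
    | pred n ih =>
      have h2 := hstep (-(n : ℤ) - 1)
      rw [show (-(n:ℤ) - 1 + 1 : ℤ) = -n by ring] at h2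
      rw [← h2, ih]
  have hDlim : Tendsto D atTop (nhds a) := by
    have := (aux_Pinf_tendsto q r hnz hs).mul hdlim
    simpa using this
  have hD0 : D 0 = a := by
    have hc : Tendsto D atTop (nhds (D 0)) := by
      have : D = fun _ => D 0 := funext hDconst
      rw [this]; exact tendsto_const_nhds
    exact tendsto_nhds_unique hc hDlim
  have hkey : ∀ k, Pinf q r k * d k = a := fun k => (hDconst k).trans hD0
  have hdet : ∀ k, (PhiMat φ ψ k).det = a / Pinf q r k := by
    intro k
    rw [PhiMat, Matrix.det_fin_two_of, eq_div_iff (hPne k), mul_comm]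
    exact hkey k
  refine ⟨hdet, ?_, ?_⟩
  · intro k
    have hd1 := hdet (k + 1)
    rw [Matrix.inv_def, hd1, Ring.inverse_eq_inv, inv_div]
    show PhiMat φ ψ k * !![(0:ℂ), 0; 0, -1]
        * ((Pinf q r (k+1) / a) • (PhiMat φ ψ (k+1)).adjugate) = _
    rw [PhiMat, PhiMat, Matrix.adjugate_fin_two]
    ext i j
    fin_cases i <;> fin_cases j <;>
      simp [Matrix.mul_apply, Fin.sum_univ_two, hγ k, hα k, hβ k, hδ k] <;> ring
  · intro k
    have h1 : (ψ (k+1)).1 = z * (ψ k).1 + q k * (ψ k).2 := by rw [hψ k]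
    have h2 : (ψ (k+1)).2 = r k * (ψ k).1 + z⁻¹ * (ψ k).2 := by rw [hψ k]
    calc (r k * α k + z⁻¹ * δ k) - (q k * β k + z * γ k)
        = (Pinf q r (k+1) * ((φ (k+1)).1 * (ψ (k+1)).2 - (ψ (k+1)).1 * (φ (k+1)).2)) / a := by
          rw [hα k, hβ k, hγ k, hδ k, h1, h2]; ring
      _ = a / a := by rw [hkey (k+1)]
      _ = 1 := div_self ha


end
end
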